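/- Let γ > 0, κ ∈ (0,1], λ > 0, a > 0, and let θ, θ* ∈ ℝ with |θ - θ*| ≤ a. Suppose z ≥ λ·|θ - θ*|^κ where z ≥ 0. Set c = min(λ/(8·γ·log 2), 1/(6·a^κ)). Then 1/(1 + exp(-z/γ)) - 1/2 ≥ c·|θ - θ*|^κ. -/
import Mathlib
set_option maxHeartbeats 1000000 in


theorem selection_accuracy_convergence (γ κ lam a : ℝ) (θ θs z : ℝ)
    (hγ : 0 < γ) (hκ0 : 0 < κ) (hκ1 : κ ≤ 1) (hlam : 0 < lam) (ha : 0 < a)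
    (hθ : |θ - θs| ≤ a) (hz0 : 0 ≤ z) (hz : lam * |θ - θs| ^ κ ≤ z) :
    min (lam / (8 * γ * Real.log 2)) (1 / (6 * a ^ κ)) * |θ - θs| ^ κ ≤
      1 / (1 + Real.exp (-z / γ)) - 1 / 2 := by
  set t : ℝ := |θ - θs| ^ κ with ht_def
  have ht0 : 0 ≤ t := Real.rpow_nonneg (abs_nonneg _) κ
  have hta : t ≤ a ^ κ := Real.rpow_le_rpow (abs_nonneg _) hθ hκ0.le
  have haκ : 0 < a ^ κ := Real.rpow_pos_of_pos ha κ
  have hL : (0.6931471803 : ℝ) < Real.log 2 := Real.log_two_gt_d9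
  have hL2 : Real.log 2 < 0.6931471808 := Real.log_two_lt_d9
  set L : ℝ := Real.log 2 with hLdef
  have hL0 : 0 < L := by linarith
  set y : ℝ := z / γ with hy_def
  have hy0 : 0 ≤ y := div_nonneg hz0 hγ.le
  have hEy : Real.exp (-z / γ) = Real.exp (-y) := by rw [neg_div]
  set E : ℝ := Real.exp (-y) with hE_def
  have hE0 : 0 < E := Real.exp_pos _
  have hE1 : E ≤ 1 := Real.exp_le_one_iff.mpr (by linarith)
  have h1E : 0 < 1 + E := by linarith
  clear_value t L y E
  have hrw : 1 / (1 + E) - 1 / 2 = (1 - E) / (2 * (1 + E)) := by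
    field_simp; ring
  rw [hEy, hrw]
  have hA : 0 < lam / (8 * γ * L) := by positivity
  have hB : 0 < 1 / (6 * a ^ κ) := by positivity
  rcases le_or_gt L y with hcase | hcase
  · -- large y : sigmoid gap at least 1/6
    have hEhalf : E ≤ 1 / 2 := by
      have h1 : Real.exp (-y) ≤ Real.exp (-L) := Real.exp_le_exp.mpr (by linarith)
      have hexpL : Real.exp L = 2 := by
        rw [hLdef]; exact Real.exp_log (by norm_num)
      have h2 : Real.exp (-L) = 1 / 2 := by rw [Real.exp_neg, hexpL]; norm_num
      linarith
    have h16 : (1 : ℝ) / 6 ≤ (1 - E) / (2 * (1 + E)) := by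
      rw [div_le_div_iff₀ (by norm_num) (by positivity)]
      nlinarith
    have hmin : min (lam / (8 * γ * L)) (1 / (6 * a ^ κ)) * t ≤ 1 / (6 * a ^ κ) * t :=
      mul_le_mul_of_nonneg_right (min_le_right _ _) ht0
    have h2 : 1 / (6 * a ^ κ) * t ≤ 1 / 6 := by
      rw [div_mul_eq_mul_div, one_mul, div_le_div_iff₀ (by positivity) (by norm_num)]
      nlinarith
    linarith
  · -- small y
    set x : ℝ := lam * t / γ with hx_def
    have hx0 : 0 ≤ x := by
      rw [hx_def]; positivity
    clear_value x
    have hxy : x ≤ y := by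
      rw [hx_def, hy_def]
      gcongr
    have hxL : x ≤ L := le_of_lt (lt_of_le_of_lt hxy hcase)
    -- exp lower bound : exp x ≥ 1 + x + x^2/4
    have hq : 1 + x + x ^ 2 / 4 ≤ Real.exp x := by
      have h1 : 1 + x / 2 ≤ Real.exp (x / 2) := by
        have := Real.add_one_le_exp (x / 2); linarith
      have h2 : Real.exp (x / 2) * Real.exp (x / 2) = Real.exp x := by
        rw [← Real.exp_add]; ring_nf
      nlinarith [Real.exp_pos (x / 2)]
    have hpos : 0 < 8 * L - 2 * x := by linarith
    -- key polynomial inequality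
    have hkey : 8 * L + 2 * x ≤ Real.exp x * (8 * L - 2 * x) := by
      have hm : (1 + x + x ^ 2 / 4) * (8 * L - 2 * x) ≤ Real.exp x * (8 * L - 2 * x) :=
        mul_le_mul_of_nonneg_right hq hpos.le
      have h1 : 0 ≤ (1 - L) * (L - x) := mul_nonneg (by linarith) (by linarith)
      have h2 : 0 ≤ (L - x) * (L + x) := mul_nonneg (by linarith) (by linarith)
      have hL3 : (69 : ℝ) / 100 ≤ L := by linarith
      have hL4 : L ≤ (7 : ℝ) / 10 := by linarith
      have h3 : 0 ≤ (L - 69 / 100) * L := mul_nonneg (by linarith) hL0.le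
      have hpoly : 8 * L + 2 * x ≤ (1 + x + x ^ 2 / 4) * (8 * L - 2 * x) := by
        nlinarith [mul_nonneg hx0 h1, mul_nonneg hx0 h2, mul_nonneg hx0 h3, h3, hL3, hL4]
      linarith
    have hEx : E ≤ Real.exp (-x) := by
      rw [hE_def]; exact Real.exp_le_exp.mpr (by linarith)
    have hexm : Real.exp (-x) * Real.exp x = 1 := by
      rw [← Real.exp_add]; simp
    have hkey2 : Real.exp (-x) * (8 * L + 2 * x) ≤ 8 * L - 2 * x := by
      have hex : 0 < Real.exp x := Real.exp_pos x
      have := mul_le_mul_of_nonneg_left hkey (le_of_lt (Real.exp_pos (-x)))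
      calc Real.exp (-x) * (8 * L + 2 * x)
          ≤ Real.exp (-x) * (Real.exp x * (8 * L - 2 * x)) := this
        _ = (Real.exp (-x) * Real.exp x) * (8 * L - 2 * x) := by ring
        _ = 8 * L - 2 * x := by rw [hexm]; ring
    have hE2 : E * (8 * L + 2 * x) ≤ 8 * L - 2 * x := by
      have : E * (8 * L + 2 * x) ≤ Real.exp (-x) * (8 * L + 2 * x) := by
        apply mul_le_mul_of_nonneg_right hEx; nlinarith
      linarith
    -- from it : x/(8L) ≤ (1-E)/(2(1+E))
    have hfrac : x / (8 * L) ≤ (1 - E) / (2 * (1 + E)) := by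
      rw [div_le_div_iff₀ (by linarith) (by positivity)]
      nlinarith
    have hmin : min (lam / (8 * γ * L)) (1 / (6 * a ^ κ)) * t ≤ lam / (8 * γ * L) * t :=
      mul_le_mul_of_nonneg_right (min_le_left _ _) ht0
    have heq : lam / (8 * γ * L) * t = x / (8 * L) := by
      rw [hx_def]; ring
    linarith [heq ▸ hmin]
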